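/- Let (Aₙ) be a sequence of real symmetric positive definite r×r matrices each of Frobenius norm 1 (i.e. tr(Aₙ²) = 1) which is Cauchy for the Hilbert projective metric d, i.e. for every ε > 0 there exists N such that d(Aₙ, Aₘ) < ε for all n, m ≥ N. Then there exists a real symmetric positive definite r×r matrix A with Frobenius norm 1 such that d(Aₙ, A) → 0. -/

import Mathlib

open Matrix

open Classical in
/-- The inverse of the positive semidefinite square root of a matrix
(junk value `1` if the matrix is not positive semidefinite). -/
noncomputable def Matrix.invSqrt {r : ℕ} (y : Matrix (Fin r) (Fin r) ℝ) :
    Matrix (Fin r) (Fin r) ℝ :=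
  if hy : y.PosSemidef then
    ((hy.1.eigenvectorUnitary : Matrix (Fin r) (Fin r) ℝ) *
      diagonal (Real.sqrt ∘ hy.1.eigenvalues) *
      (star hy.1.eigenvectorUnitary : Matrix (Fin r) (Fin r) ℝ))⁻¹ else 1

/-- `λ_max(x,y)`: the greatest eigenvalue of `y^{-1/2} * x * y^{-1/2}`. -/
noncomputable def Matrix.lambdaMax {r : ℕ} (x y : Matrix (Fin r) (Fin r) ℝ) : ℝ :=
  sSup (spectrum ℝ (y.invSqrt * x * y.invSqrt))

/-- The Hilbert projective metric `d(x,y) = log (λ_max(x,y) · λ_max(y,x))`. -/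
noncomputable def Matrix.hilbertDist {r : ℕ} (x y : Matrix (Fin r) (Fin r) ℝ) : ℝ :=
  Real.log (x.lambdaMax y * y.lambdaMax x)


open Filter in
theorem _hilbertaux_placeholder : True := trivial

namespace HilbertAux
open Filter


variable {r : ℕ}

abbrev Mat (r : ℕ) := Matrix (Fin r) (Fin r) ℝ

lemma psd_smul {M : Mat r} (hM : M.PosSemidef) {c : ℝ} (hc : 0 ≤ c) : (c • M).PosSemidef := by
  refine .of_dotProduct_mulVec_nonneg ?_ fun x => ?_
  · unfold Matrix.IsHermitian
    rw [conjTranspose_smul, hM.1.eq]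
    simp
  · have := hM.dotProduct_mulVec_nonneg x
    rw [smul_mulVec, dotProduct_smul]
    exact mul_nonneg hc this

lemma psd_diag {M : Mat r} (hM : M.PosSemidef) (i : Fin r) : 0 ≤ M i i := by
  have := hM.dotProduct_mulVec_nonneg (Pi.single i 1)
  simpa [mulVec_single, single_dotProduct] using this

lemma psd_trace {M : Mat r} (hM : M.PosSemidef) : 0 ≤ M.trace := by
  rw [Matrix.trace]
  exact Finset.sum_nonneg fun i _ => psd_diag hM i

lemma posdef_diag {M : Mat r} (hM : M.PosDef) (i : Fin r) : 0 < M i i := by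
  have := hM.dotProduct_mulVec_pos (x := Pi.single i 1) (by simp [Pi.single_eq_same, funext_iff]; exact ⟨i, by simp⟩)
  simpa [mulVec_single, single_dotProduct] using this

lemma posdef_trace {M : Mat r} (hr : 0 < r) (hM : M.PosDef) : 0 < M.trace := by
  haveI : Nonempty (Fin r) := Fin.pos_iff_nonempty.mp hr
  rw [Matrix.trace]
  exact Finset.sum_pos (fun i _ => posdef_diag hM i) Finset.univ_nonempty

lemma psd_posDef {M : Mat r} (hM : M.PosSemidef) (h : IsUnit M.det) : M.PosDef := by
  refine .of_dotProduct_mulVec_pos hM.1 fun x hx => (hM.dotProduct_mulVec_nonneg x).lt_of_ne' fun h0 => hx ?_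
  have hMx : M *ᵥ x = 0 := (hM.dotProduct_mulVec_zero_iff x).mp h0
  have : M⁻¹ *ᵥ (M *ᵥ x) = x := by
    rw [mulVec_mulVec, nonsing_inv_mul M h, one_mulVec]
  rw [hMx, mulVec_zero] at this
  exact this.symm

noncomputable def psqrt {M : Mat r} (hM : M.PosSemidef) : Mat r :=
  (hM.1.eigenvectorUnitary : Mat r) * diagonal (Real.sqrt ∘ hM.1.eigenvalues) *
    (star hM.1.eigenvectorUnitary : Mat r)

lemma psqrt_mul_self {M : Mat r} (hM : M.PosSemidef) : psqrt hM * psqrt hM = M := by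
  have hU : (star hM.1.eigenvectorUnitary : Mat r) * (hM.1.eigenvectorUnitary : Mat r) = 1 := by
    simp
  have hD : diagonal (Real.sqrt ∘ hM.1.eigenvalues) * diagonal (Real.sqrt ∘ hM.1.eigenvalues)
      = diagonal hM.1.eigenvalues := by
    rw [diagonal_mul_diagonal]; congr 1; funext i
    exact Real.mul_self_sqrt (hM.eigenvalues_nonneg i)
  have hspec := hM.1.spectral_theorem
  rw [Unitary.conjStarAlgAut_apply] at hspec
  unfold psqrt
  simp only [Matrix.mul_assoc]
  rw [← Matrix.mul_assoc (star hM.1.eigenvectorUnitary : Mat r), hU, one_mul,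
    ← Matrix.mul_assoc (diagonal _), hD, ← Matrix.mul_assoc]
  exact hspec.symm

lemma posSemidef_psqrt {M : Mat r} (hM : M.PosSemidef) : (psqrt hM).PosSemidef := by
  have h := (PosSemidef.diagonal (d := Real.sqrt ∘ hM.1.eigenvalues)
    (fun i => Real.sqrt_nonneg _)).mul_mul_conjTranspose_same (hM.1.eigenvectorUnitary : Mat r)
  unfold psqrt
  rwa [star_eq_conjTranspose]

lemma trace_mul_psd_nonneg {x y : Mat r} (hx : x.PosSemidef) (hy : y.PosSemidef) :
    0 ≤ (x * y).trace := by
  have h1 : x * y = (psqrt hx) * ((psqrt hx) * y) := by rw [← mul_assoc, psqrt_mul_self hx]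
  have h2 : (x * y).trace = ((psqrt hx) * y * (psqrt hx)).trace := by
    rw [h1, trace_mul_comm]
  rw [h2]
  have := hy.mul_mul_conjTranspose_same (psqrt hx)
  rw [(posSemidef_psqrt hx).1.eq] at this
  exact psd_trace this

section Spectral

variable {M : Mat r} (hM : M.IsHermitian)

lemma unitary_facts :
    (hM.eigenvectorUnitary : Mat r) * (hM.eigenvectorUnitary : Mat r)ᴴ = 1 ∧
    (hM.eigenvectorUnitary : Mat r)ᴴ * (hM.eigenvectorUnitary : Mat r) = 1 := by
  constructor
  · rw [← star_eq_conjTranspose]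
    exact (Matrix.mem_unitaryGroup_iff).mp (hM.eigenvectorUnitary).2
  · rw [← star_eq_conjTranspose]
    exact (Matrix.mem_unitaryGroup_iff').mp (hM.eigenvectorUnitary).2

lemma spectral_real : M = (hM.eigenvectorUnitary : Mat r) * diagonal hM.eigenvalues *
    (hM.eigenvectorUnitary : Mat r)ᴴ := by
  have := hM.spectral_theorem
  rw [Unitary.conjStarAlgAut_apply] at this
  rw [← star_eq_conjTranspose]
  exact this

lemma conj_diagonal (d : Fin r → ℝ) :
    ((hM.eigenvectorUnitary : Mat r) * diagonal d * (hM.eigenvectorUnitary : Mat r)ᴴ).PosSemidef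
      ↔ ∀ i, 0 ≤ d i := by
  obtain ⟨hU1, hU2⟩ := unitary_facts hM
  constructor
  · intro h
    have h2 := h.conjTranspose_mul_mul_same (hM.eigenvectorUnitary : Mat r)
    have h3 : (hM.eigenvectorUnitary : Mat r)ᴴ *
        ((hM.eigenvectorUnitary : Mat r) * diagonal d * (hM.eigenvectorUnitary : Mat r)ᴴ) *
        (hM.eigenvectorUnitary : Mat r) = diagonal d := by
      simp only [← Matrix.mul_assoc]
      rw [hU2, one_mul, Matrix.mul_assoc, hU2, mul_one]
    rw [h3] at h2
    exact posSemidef_diagonal_iff.mp h2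
  · intro h
    exact (PosSemidef.diagonal (fun i => h i)).mul_mul_conjTranspose_same _

lemma herm_sub_smul_one (t : ℝ) :
    t • (1 : Mat r) - M = (hM.eigenvectorUnitary : Mat r) *
      diagonal (fun i => t - hM.eigenvalues i) * (hM.eigenvectorUnitary : Mat r)ᴴ := by
  obtain ⟨hU1, hU2⟩ := unitary_facts hM
  have hd : diagonal (fun i => t - hM.eigenvalues i) =
      t • (1 : Mat r) - diagonal hM.eigenvalues := by
    ext i j
    by_cases h : i = j
    · subst h; simp [diagonal_apply_eq, Matrix.one_apply]
    · simp [diagonal_apply_ne _ h, Matrix.one_apply_ne h]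
  rw [hd, Matrix.mul_sub, Matrix.sub_mul]
  congr 1
  · rw [Matrix.mul_smul, Matrix.smul_mul, mul_one, hU1]
  · exact spectral_real hM

lemma herm_smul_one_sub_psd_iff (t : ℝ) :
    (t • (1 : Mat r) - M).PosSemidef ↔ ∀ i, hM.eigenvalues i ≤ t := by
  rw [herm_sub_smul_one hM t, conj_diagonal hM]
  exact forall_congr' fun i => by rw [sub_nonneg]

lemma herm_sub_smul_one_psd_iff (t : ℝ) :
    (M - t • (1 : Mat r)).PosSemidef ↔ ∀ i, t ≤ hM.eigenvalues i := by
  have hdn : diagonal (fun i => hM.eigenvalues i - t) =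
      -(diagonal fun i => t - hM.eigenvalues i) := by
    have : (fun i => hM.eigenvalues i - t) = fun i => -(t - hM.eigenvalues i) := by
      funext i; ring
    rw [this, diagonal_neg]
  have key : M - t • (1 : Mat r) = (hM.eigenvectorUnitary : Mat r) *
      diagonal (fun i => hM.eigenvalues i - t) * (hM.eigenvectorUnitary : Mat r)ᴴ := by
    calc M - t • (1 : Mat r) = -(t • (1 : Mat r) - M) := by abel
    _ = -((hM.eigenvectorUnitary : Mat r) * diagonal (fun i => t - hM.eigenvalues i) *
        (hM.eigenvectorUnitary : Mat r)ᴴ) := by rw [← herm_sub_smul_one hM t]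
    _ = (hM.eigenvectorUnitary : Mat r) * diagonal (fun i => hM.eigenvalues i - t) *
        (hM.eigenvectorUnitary : Mat r)ᴴ := by
        rw [hdn, Matrix.mul_neg, Matrix.neg_mul]
  rw [key, conj_diagonal hM]
  exact forall_congr' fun i => by rw [sub_nonneg]

lemma trace_sq_eq : (M * M).trace = ∑ i, hM.eigenvalues i ^ 2 := by
  obtain ⟨hU1, hU2⟩ := unitary_facts hM
  have h1 : M * M = (hM.eigenvectorUnitary : Mat r) *
      (diagonal hM.eigenvalues * diagonal hM.eigenvalues) *
      (hM.eigenvectorUnitary : Mat r)ᴴ := by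
    conv_lhs => rw [spectral_real hM]
    simp only [Matrix.mul_assoc]
    rw [← Matrix.mul_assoc (hM.eigenvectorUnitary : Mat r)ᴴ (hM.eigenvectorUnitary : Mat r),
      hU2, one_mul]
  rw [h1, trace_mul_cycle, ← Matrix.mul_assoc, hU2, one_mul, diagonal_mul_diagonal,
    trace_diagonal]
  exact Finset.sum_congr rfl fun i _ => (sq _).symm

end Spectral

section LambdaMax

section Y
variable {y : Mat r} (hy : y.PosDef)
include hy

lemma sqrt_posDef : (psqrt hy.posSemidef).PosDef := by
  refine psd_posDef (posSemidef_psqrt hy.posSemidef) (isUnit_iff_ne_zero.mpr fun h0 => ?_)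
  have : (psqrt hy.posSemidef).det * (psqrt hy.posSemidef).det = y.det := by
    rw [← det_mul, psqrt_mul_self hy.posSemidef]
  rw [h0, mul_zero] at this
  exact hy.det_pos.ne' this.symm

lemma invSqrt_eq : y.invSqrt = (psqrt hy.posSemidef)⁻¹ := dif_pos hy.posSemidef

lemma invSqrt_posDef : y.invSqrt.PosDef := by
  rw [invSqrt_eq hy]; exact (sqrt_posDef hy).inv

lemma invSqrt_mul_sqrt : y.invSqrt * (psqrt hy.posSemidef) = 1 := by
  rw [invSqrt_eq hy]
  exact nonsing_inv_mul _ (isUnit_iff_ne_zero.mpr (sqrt_posDef hy).det_pos.ne')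

lemma sqrt_mul_invSqrt : (psqrt hy.posSemidef) * y.invSqrt = 1 := by
  rw [invSqrt_eq hy]
  exact mul_nonsing_inv _ (isUnit_iff_ne_zero.mpr (sqrt_posDef hy).det_pos.ne')

lemma invSqrt_conj_self : y.invSqrt * y * y.invSqrt = 1 := by
  set s := y.invSqrt with hs
  rw [← psqrt_mul_self hy.posSemidef, ← Matrix.mul_assoc, Matrix.mul_assoc (s * (psqrt hy.posSemidef)),
    hs, invSqrt_mul_sqrt hy, sqrt_mul_invSqrt hy, one_mul]

end Y

section XY
variable {x y : Mat r} (hx : x.PosDef) (hy : y.PosDef)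
include hx hy

lemma conj_posDef : (y.invSqrt * x * y.invSqrt).PosDef := by
  have hpsd : (y.invSqrt * x * y.invSqrt).PosSemidef := by
    have := hx.posSemidef.mul_mul_conjTranspose_same y.invSqrt
    rwa [(invSqrt_posDef hy).1.eq] at this
  refine psd_posDef hpsd (isUnit_iff_ne_zero.mpr ?_)
  rw [det_mul, det_mul]
  have h1 := (invSqrt_posDef hy).det_pos
  have h2 := hx.det_pos
  positivity

lemma lambdaMax_eq : x.lambdaMax y = ⨆ i, (conj_posDef hx hy).1.eigenvalues i := by
  unfold Matrix.lambdaMax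
  rw [(conj_posDef hx hy).1.spectrum_real_eq_range_eigenvalues]
  rfl

lemma lambdaMax_pos (hr : 0 < r) : 0 < x.lambdaMax y := by
  haveI : Nonempty (Fin r) := Fin.pos_iff_nonempty.mp hr
  obtain ⟨i⟩ := ‹Nonempty (Fin r)›
  rw [lambdaMax_eq hx hy]
  calc (0:ℝ) < (conj_posDef hx hy).1.eigenvalues i := (conj_posDef hx hy).eigenvalues_pos i
  _ ≤ _ := le_ciSup (Set.Finite.bddAbove (Set.finite_range _)) i

lemma conj_psd_iff (t : ℝ) :
    (t • y - x).PosSemidef ↔ (t • (1 : Mat r) - y.invSqrt * x * y.invSqrt).PosSemidef := by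
  have hsh := (invSqrt_posDef hy).1.eq
  constructor
  · intro h
    have h2 := h.mul_mul_conjTranspose_same y.invSqrt
    rw [hsh] at h2
    have h3 : y.invSqrt * (t • y - x) * y.invSqrt =
        t • (1 : Mat r) - y.invSqrt * x * y.invSqrt := by
      rw [Matrix.mul_sub, Matrix.sub_mul, Matrix.mul_smul, Matrix.smul_mul,
        invSqrt_conj_self hy]
    rwa [h3] at h2
  · intro h
    have h2 := h.mul_mul_conjTranspose_same (psqrt hy.posSemidef)
    rw [(sqrt_posDef hy).1.eq] at h2
    have h3 : (psqrt hy.posSemidef) * (t • (1 : Mat r) - y.invSqrt * x * y.invSqrt) *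
        (psqrt hy.posSemidef) = t • y - x := by
      rw [Matrix.mul_sub, Matrix.sub_mul, Matrix.mul_smul, Matrix.smul_mul, mul_one,
        psqrt_mul_self hy.posSemidef]
      congr 1
      calc (psqrt hy.posSemidef) * (y.invSqrt * x * y.invSqrt) * (psqrt hy.posSemidef)
          = ((psqrt hy.posSemidef) * y.invSqrt) * x * (y.invSqrt * (psqrt hy.posSemidef)) := by
            simp only [Matrix.mul_assoc]
      _ = x := by rw [sqrt_mul_invSqrt hy, invSqrt_mul_sqrt hy, one_mul, mul_one]
    rwa [h3] at h2

lemma lambdaMax_le_iff (hr : 0 < r) {t : ℝ} :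
    x.lambdaMax y ≤ t ↔ (t • y - x).PosSemidef := by
  haveI : Nonempty (Fin r) := Fin.pos_iff_nonempty.mp hr
  rw [lambdaMax_eq hx hy, conj_psd_iff hx hy t,
    herm_smul_one_sub_psd_iff (conj_posDef hx hy).1 t]
  exact ciSup_le_iff (Set.Finite.bddAbove (Set.finite_range _))

lemma le_lambdaMax_smul (hr : 0 < r) : ((x.lambdaMax y) • y - x).PosSemidef :=
  (lambdaMax_le_iff hx hy hr).mp le_rfl

lemma one_le_lambdaMax_mul (hr : 0 < r) : 1 ≤ x.lambdaMax y * y.lambdaMax x := by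
  have hα := le_lambdaMax_smul hx hy hr
  have hβ := le_lambdaMax_smul hy hx hr
  have hβpos := lambdaMax_pos hy hx hr
  have h : ((x.lambdaMax y * y.lambdaMax x - 1) • y).PosSemidef := by
    have heq : (x.lambdaMax y * y.lambdaMax x - 1) • y =
        (y.lambdaMax x) • ((x.lambdaMax y) • y - x) + ((y.lambdaMax x) • x - y) := by
      rw [sub_smul, one_smul, smul_sub, smul_smul, mul_comm]
      abel
    rw [heq]
    exact (psd_smul hα hβpos.le).add hβ
  have ht := psd_trace h
  rw [trace_smul, smul_eq_mul] at ht
  have hty := posdef_trace hr hy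
  nlinarith

lemma one_le_of_norm (hr : 0 < r) (hnx : (x * x).trace = 1) (hny : (y * y).trace = 1)
    {β : ℝ} (hβ : (β • x - y).PosSemidef) : 1 ≤ β := by
  have t1 : 0 ≤ ((β • x - y) * y).trace := trace_mul_psd_nonneg hβ hy.posSemidef
  have t2 : 0 ≤ ((β • x - y) * x).trace := trace_mul_psd_nonneg hβ hx.posSemidef
  have t3 : 0 ≤ (x * y).trace := trace_mul_psd_nonneg hx.posSemidef hy.posSemidef
  rw [Matrix.sub_mul, Matrix.smul_mul, trace_sub, trace_smul, smul_eq_mul, hny] at t1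
  rw [Matrix.sub_mul, Matrix.smul_mul, trace_sub, trace_smul, smul_eq_mul, hnx,
    trace_mul_comm] at t2
  have hβ0 : 0 < β := by nlinarith
  nlinarith

end XY

end LambdaMax

lemma le_one_of_norm {M : Mat r} (hM : M.PosSemidef) (h1 : (M * M).trace = 1) :
    ((1:ℝ) • (1 : Mat r) - M).PosSemidef := by
  refine (herm_smul_one_sub_psd_iff hM.1 1).mpr fun i => ?_
  have hsum := trace_sq_eq hM.1
  rw [h1] at hsum
  have hle : hM.1.eigenvalues i ^ 2 ≤ 1 := by
    calc hM.1.eigenvalues i ^ 2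
        ≤ ∑ j, hM.1.eigenvalues j ^ 2 :=
          Finset.single_le_sum (f := fun j => hM.1.eigenvalues j ^ 2)
            (fun j _ => sq_nonneg _) (Finset.mem_univ i)
      _ = 1 := hsum.symm
  nlinarith [hM.eigenvalues_nonneg i]

lemma exists_smul_one_le (hr : 0 < r) {M : Mat r} (hM : M.PosDef) :
    ∃ μ : ℝ, 0 < μ ∧ (M - μ • (1 : Mat r)).PosSemidef := by
  haveI : Nonempty (Fin r) := Fin.pos_iff_nonempty.mp hr
  refine ⟨Finset.univ.inf' Finset.univ_nonempty hM.1.eigenvalues, ?_, ?_⟩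
  · obtain ⟨i, _, hi⟩ := Finset.exists_mem_eq_inf' Finset.univ_nonempty hM.1.eigenvalues
    rw [hi]
    exact hM.eigenvalues_pos i
  · exact (herm_sub_smul_one_psd_iff hM.1 _).mpr fun i =>
      Finset.inf'_le _ (Finset.mem_univ i)

lemma posDef_smul_one (hr : 0 < r) {c : ℝ} (hc : 0 < c) : (c • (1 : Mat r)).PosDef := by
  refine .of_dotProduct_mulVec_pos ?_ fun v hv => ?_
  · unfold Matrix.IsHermitian
    rw [conjTranspose_smul, conjTranspose_one]
    simp
  · rw [smul_mulVec, one_mulVec, dotProduct_smul, smul_eq_mul]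
    exact mul_pos hc (Matrix.dotProduct_star_self_pos_iff.mpr hv)

lemma entry_abs {M : Mat r} (hsym : M.IsHermitian) {c : ℝ} (hc : 0 ≤ c)
    (h1 : (c • (1 : Mat r) - M).PosSemidef) (h2 : (c • (1 : Mat r) + M).PosSemidef)
    (i j : Fin r) : |M i j| ≤ c := by
  have quad : ∀ v : Fin r → ℝ, |v ⬝ᵥ M *ᵥ v| ≤ c * (v ⬝ᵥ v) := by
    intro v
    have q1 := h1.dotProduct_mulVec_nonneg v
    have q2 := h2.dotProduct_mulVec_nonneg v
    have hsv : star v = v := by funext k; simp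
    rw [hsv] at q1 q2
    have e1 : v ⬝ᵥ (c • (1 : Mat r) - M) *ᵥ v = c * (v ⬝ᵥ v) - v ⬝ᵥ M *ᵥ v := by
      rw [sub_mulVec, dotProduct_sub, smul_mulVec, one_mulVec, dotProduct_smul,
        smul_eq_mul]
    have e2 : v ⬝ᵥ (c • (1 : Mat r) + M) *ᵥ v = c * (v ⬝ᵥ v) + v ⬝ᵥ M *ᵥ v := by
      rw [add_mulVec, dotProduct_add, smul_mulVec, one_mulVec, dotProduct_smul,
        smul_eq_mul]
    rw [e1] at q1
    rw [e2] at q2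
    rw [abs_le]
    constructor <;> linarith
  have base : ∀ a b : Fin r, (Pi.single a 1 : Fin r → ℝ) ⬝ᵥ M *ᵥ Pi.single b 1 = M a b := by
    intro a b
    rw [mulVec_single, single_dotProduct]
    simp
  have hMji : M j i = M i j := by
    have h := congrFun (congrFun hsym.eq i) j
    rw [conjTranspose_apply] at h
    simpa using h
  by_cases hij : i = j
  · subst hij
    have := quad (Pi.single i 1)
    have hd : (Pi.single i 1 : Fin r → ℝ) ⬝ᵥ Pi.single i 1 = 1 := by
      rw [single_dotProduct]; simp
    rw [base i i, hd, mul_one] at this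
    exact this
  · have qv := quad (Pi.single i 1 + Pi.single j 1)
    have qw := quad (Pi.single i 1 - Pi.single j 1)
    have hcross : (Pi.single i 1 : Fin r → ℝ) ⬝ᵥ Pi.single j 1 = 0 := by
      rw [single_dotProduct, Pi.single_eq_of_ne hij, mul_zero]
    have hcross' : (Pi.single j 1 : Fin r → ℝ) ⬝ᵥ Pi.single i 1 = 0 := by
      rw [single_dotProduct, Pi.single_eq_of_ne (Ne.symm hij), mul_zero]
    have hself : ∀ a : Fin r, (Pi.single a 1 : Fin r → ℝ) ⬝ᵥ Pi.single a 1 = 1 := by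
      intro a; rw [single_dotProduct]; simp
    have hv : (Pi.single i 1 + Pi.single j 1 : Fin r → ℝ) ⬝ᵥ M *ᵥ (Pi.single i 1 + Pi.single j 1)
        = M i i + M j j + 2 * M i j := by
      rw [mulVec_add, dotProduct_add, add_dotProduct, add_dotProduct, base, base, base, base,
        hMji]
      ring
    have hw : (Pi.single i 1 - Pi.single j 1 : Fin r → ℝ) ⬝ᵥ M *ᵥ (Pi.single i 1 - Pi.single j 1)
        = M i i + M j j - 2 * M i j := by
      rw [mulVec_sub, dotProduct_sub, sub_dotProduct, sub_dotProduct, base, base, base, base,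
        hMji]
      ring
    have hvv : (Pi.single i 1 + Pi.single j 1 : Fin r → ℝ) ⬝ᵥ (Pi.single i 1 + Pi.single j 1)
        = 2 := by
      rw [dotProduct_add, add_dotProduct, add_dotProduct, hcross, hcross', hself, hself]
      ring
    have hww : (Pi.single i 1 - Pi.single j 1 : Fin r → ℝ) ⬝ᵥ (Pi.single i 1 - Pi.single j 1)
        = 2 := by
      rw [dotProduct_sub, sub_dotProduct, sub_dotProduct, hcross, hcross', hself, hself]
      ring
    rw [hv, hvv] at qv
    rw [hw, hww] at qw
    rw [abs_le] at qv qw ⊢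
    constructor <;> linarith

lemma psd_of_tendsto {C : ℕ → Mat r} {D : Mat r} (h : Tendsto C atTop (nhds D))
    (hC : ∀ᶠ n in atTop, (C n).PosSemidef) : D.PosSemidef := by
  refine .of_dotProduct_mulVec_nonneg ?_ ?_
  · have hconj : Tendsto (fun n => (C n)ᴴ) atTop (nhds Dᴴ) :=
      ((continuous_id.matrix_conjTranspose).tendsto D).comp h
    have hconj' : Tendsto (fun n => (C n)ᴴ) atTop (nhds D) :=
      h.congr' (hC.mono fun n hn => hn.1.eq.symm)
    exact tendsto_nhds_unique hconj hconj'
  · intro v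
    have hcont : Continuous fun M : Mat r => star v ⬝ᵥ M *ᵥ v :=
      Continuous.dotProduct continuous_const
        (continuous_id.matrix_mulVec continuous_const)
    have hl : Tendsto (fun n => star v ⬝ᵥ (C n) *ᵥ v) atTop (nhds (star v ⬝ᵥ D *ᵥ v)) :=
      (hcont.tendsto D).comp h
    exact ge_of_tendsto hl (hC.mono fun n hn => hn.dotProduct_mulVec_nonneg v)


end HilbertAux

open HilbertAux Filter in
/-- The intersection of the symmetric cone of positive definite symmetric `r × r`
matrices with the unit sphere `tr(A²) = 1` is complete for the Hilbert projective
metric: every Cauchy sequence converges in it. -/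
theorem hilbert_metric_complete (r : ℕ) (hr : 0 < r)
    (A : ℕ → Matrix (Fin r) (Fin r) ℝ)
    (hpos : ∀ n, (A n).PosDef) (hnorm : ∀ n, (A n * A n).trace = 1)
    (hcauchy : ∀ ε : ℝ, 0 < ε → ∃ N : ℕ, ∀ n ≥ N, ∀ m ≥ N, (A n).hilbertDist (A m) < ε) :
    ∃ B : Matrix (Fin r) (Fin r) ℝ, B.PosDef ∧ (B * B).trace = 1 ∧
      Filter.Tendsto (fun n => (A n).hilbertDist B) Filter.atTop (nhds 0) := by
  classical
  haveI : Nonempty (Fin r) := Fin.pos_iff_nonempty.mp hr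
  -- Step 1: uniform Loewner bounds from the Cauchy hypothesis
  have key : ∀ ε : ℝ, 0 < ε → ∃ N : ℕ, ∀ n ≥ N, ∀ m ≥ N,
      ((Real.exp ε) • A m - A n).PosSemidef := by
    intro ε hε
    obtain ⟨N, hN⟩ := hcauchy ε hε
    refine ⟨N, fun n hn m hm => ?_⟩
    have hα := le_lambdaMax_smul (hpos n) (hpos m) hr
    have hβ1 : 1 ≤ (A m).lambdaMax (A n) :=
      one_le_of_norm (hpos n) (hpos m) hr (hnorm n) (hnorm m)
        (le_lambdaMax_smul (hpos m) (hpos n) hr)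
    have hprod : (A n).lambdaMax (A m) * (A m).lambdaMax (A n) < Real.exp ε := by
      have hd := hN n hn m hm
      unfold Matrix.hilbertDist at hd
      have hpos' : 0 < (A n).lambdaMax (A m) * (A m).lambdaMax (A n) :=
        mul_pos (lambdaMax_pos (hpos n) (hpos m) hr) (lambdaMax_pos (hpos m) (hpos n) hr)
      calc (A n).lambdaMax (A m) * (A m).lambdaMax (A n)
          = Real.exp (Real.log ((A n).lambdaMax (A m) * (A m).lambdaMax (A n))) :=
            (Real.exp_log hpos').symm
        _ < Real.exp ε := Real.exp_lt_exp.mpr hd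
    have hαlt : (A n).lambdaMax (A m) < Real.exp ε := by
      have h0 := lambdaMax_pos (hpos n) (hpos m) hr
      nlinarith
    have heq : (Real.exp ε) • A m - A n =
        ((Real.exp ε - (A n).lambdaMax (A m)) • A m) + ((A n).lambdaMax (A m) • A m - A n) := by
      rw [sub_smul]; abel
    rw [heq]
    exact (psd_smul (hpos m).posSemidef (by linarith)).add hα
  -- Step 2: entrywise Cauchy bounds
  have ebound : ∀ ε : ℝ, 0 < ε → ∃ N, ∀ n ≥ N, ∀ m ≥ N, ∀ i j,
      |A n i j - A m i j| ≤ Real.exp ε - 1 := by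
    intro ε hε
    obtain ⟨N, hN⟩ := key ε hε
    refine ⟨N, fun n hn m hm i j => ?_⟩
    have hc : (0:ℝ) ≤ Real.exp ε - 1 := by nlinarith [Real.add_one_le_exp ε]
    have hsym : (A n - A m).IsHermitian := (hpos n).1.sub (hpos m).1
    refine entry_abs hsym hc ?_ ?_ i j
    · have e1 := hN n hn m hm
      have e2 := le_one_of_norm (hpos m).posSemidef (hnorm m)
      have heq : (Real.exp ε - 1) • (1 : Matrix (Fin r) (Fin r) ℝ) - (A n - A m) =
          ((Real.exp ε) • A m - A n) +
            (Real.exp ε - 1) • ((1:ℝ) • (1 : Matrix (Fin r) (Fin r) ℝ) - A m) := by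
        simp only [smul_sub, sub_smul, smul_smul, one_smul, mul_one]
        abel
      rw [heq]
      exact e1.add (psd_smul e2 hc)
    · have e1 := hN m hm n hn
      have e2 := le_one_of_norm (hpos n).posSemidef (hnorm n)
      have heq : (Real.exp ε - 1) • (1 : Matrix (Fin r) (Fin r) ℝ) + (A n - A m) =
          ((Real.exp ε) • A n - A m) +
            (Real.exp ε - 1) • ((1:ℝ) • (1 : Matrix (Fin r) (Fin r) ℝ) - A n) := by
        simp only [smul_sub, sub_smul, smul_smul, one_smul, mul_one]
        abel
      rw [heq]
      exact e1.add (psd_smul e2 hc)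
  -- Step 3: construct the limit B entrywise
  have ecauchy : ∀ i j, CauchySeq (fun n => A n i j) := by
    intro i j
    rw [Metric.cauchySeq_iff]
    intro ε hε
    have hδ : (0:ℝ) < Real.log (1 + ε/2) := Real.log_pos (by linarith)
    obtain ⟨N, hN⟩ := ebound _ hδ
    refine ⟨N, fun m hm n hn => ?_⟩
    have h := hN m hm n hn i j
    rw [Real.exp_log (by linarith)] at h
    rw [Real.dist_eq]
    calc |A m i j - A n i j| ≤ 1 + ε/2 - 1 := h
      _ < ε := by linarith
  have hex : ∀ i j, ∃ b : ℝ, Tendsto (fun n => A n i j) atTop (nhds b) :=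
    fun i j => cauchySeq_tendsto_of_complete (ecauchy i j)
  choose Bf hBf using hex
  set B : Matrix (Fin r) (Fin r) ℝ := Matrix.of Bf with hBdef
  have hB : Tendsto A atTop (nhds B) := by
    refine tendsto_pi_nhds.mpr ?_
    intro i
    rw [tendsto_pi_nhds]
    intro j
    exact hBf i j
  -- Step 4: B is positive definite with unit norm
  obtain ⟨N₀, hN₀⟩ := key 1 one_pos
  obtain ⟨μ, hμpos, hμ⟩ := exists_smul_one_le hr (hpos N₀)
  have hcpos : (0:ℝ) < (Real.exp 1)⁻¹ * μ := by positivity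
  have hlow : ∀ n ≥ N₀, ((A n) - ((Real.exp 1)⁻¹ * μ) • (1 : Matrix (Fin r) (Fin r) ℝ)).PosSemidef := by
    intro n hn
    have h1 := hN₀ N₀ le_rfl n hn
    have hne : Real.exp 1 ≠ 0 := (Real.exp_pos 1).ne'
    have heq : A n - ((Real.exp 1)⁻¹ * μ) • (1 : Matrix (Fin r) (Fin r) ℝ) =
        (Real.exp 1)⁻¹ • ((Real.exp 1) • A n - A N₀)
          + (Real.exp 1)⁻¹ • (A N₀ - μ • (1 : Matrix (Fin r) (Fin r) ℝ)) := by
      simp only [smul_sub, smul_smul, inv_mul_cancel₀ hne, one_smul]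
      abel
    rw [heq]
    exact (psd_smul h1 (by positivity)).add (psd_smul hμ (by positivity))
  have hBlow : (B - ((Real.exp 1)⁻¹ * μ) • (1 : Matrix (Fin r) (Fin r) ℝ)).PosSemidef := by
    refine psd_of_tendsto (hB.sub tendsto_const_nhds) ?_
    exact eventually_atTop.mpr ⟨N₀, hlow⟩
  have hBpos : B.PosDef := by
    have heq : B = (B - ((Real.exp 1)⁻¹ * μ) • (1 : Matrix (Fin r) (Fin r) ℝ))
        + ((Real.exp 1)⁻¹ * μ) • (1 : Matrix (Fin r) (Fin r) ℝ) := by abel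
    rw [heq]
    exact Matrix.PosDef.posSemidef_add hBlow (posDef_smul_one hr hcpos)
  have hBnorm : (B * B).trace = 1 := by
    have h1 : Tendsto (fun n => ((A n) * (A n)).trace) atTop (nhds ((B * B).trace)) :=
      (((continuous_id.matrix_mul continuous_id).matrix_trace).tendsto B).comp hB
    have h2 : Tendsto (fun n => ((A n) * (A n)).trace) atTop (nhds 1) := by
      simp only [hnorm]
      exact tendsto_const_nhds
    exact tendsto_nhds_unique h1 h2
  refine ⟨B, hBpos, hBnorm, ?_⟩
  -- Step 5: convergence in the Hilbert metric
  rw [Metric.tendsto_atTop]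
  intro ε hε
  obtain ⟨N, hN⟩ := key (ε/4) (by linarith)
  refine ⟨N, fun n hn => ?_⟩
  have l1 : ((Real.exp (ε/4)) • B - A n).PosSemidef := by
    refine psd_of_tendsto ((hB.const_smul (Real.exp (ε/4))).sub tendsto_const_nhds) ?_
    exact eventually_atTop.mpr ⟨N, fun m hm => hN n hn m hm⟩
  have l2 : ((Real.exp (ε/4)) • A n - B).PosSemidef := by
    refine psd_of_tendsto (tendsto_const_nhds.sub hB) ?_
    exact eventually_atTop.mpr ⟨N, fun m hm => hN m hm n hn⟩
  have g1 : (A n).lambdaMax B ≤ Real.exp (ε/4) := (lambdaMax_le_iff (hpos n) hBpos hr).mpr l1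
  have g2 : B.lambdaMax (A n) ≤ Real.exp (ε/4) := (lambdaMax_le_iff hBpos (hpos n) hr).mpr l2
  have gp1 : 0 < (A n).lambdaMax B := lambdaMax_pos (hpos n) hBpos hr
  have gp2 : 0 < B.lambdaMax (A n) := lambdaMax_pos hBpos (hpos n) hr
  have hge : 1 ≤ (A n).lambdaMax B * B.lambdaMax (A n) :=
    one_le_lambdaMax_mul (hpos n) hBpos hr
  have hub : (A n).lambdaMax B * B.lambdaMax (A n) ≤ Real.exp (ε/2) := by
    calc (A n).lambdaMax B * B.lambdaMax (A n)
        ≤ Real.exp (ε/4) * Real.exp (ε/4) :=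
          mul_le_mul g1 g2 gp2.le (Real.exp_pos _).le
      _ = Real.exp (ε/2) := by rw [← Real.exp_add]; ring_nf
  rw [Real.dist_eq, sub_zero]
  unfold Matrix.hilbertDist
  have hlog1 : 0 ≤ Real.log ((A n).lambdaMax B * B.lambdaMax (A n)) := Real.log_nonneg hge
  have hlog2 : Real.log ((A n).lambdaMax B * B.lambdaMax (A n)) ≤ ε/2 := by
    calc Real.log ((A n).lambdaMax B * B.lambdaMax (A n))
        ≤ Real.log (Real.exp (ε/2)) := Real.log_le_log (by positivity) hub
      _ = ε/2 := Real.log_exp _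
  rw [abs_of_nonneg hlog1]
  linarith
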